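/- For every p ∈ (0,1) and every natural number m ≥ 1, the m-th power of the matrix Q = [[1-p, √(p(1-p))], [√(p(1-p)), 0]] equals (λ_PF^m / √((1-p)(3p+1))) · [[λ_PF - a^m·λ_r, (1-a^m)·√(p(1-p))], [(1-a^m)·√(p(1-p)), -λ_r + a^m·λ_PF]], where λ_r, λ_PF are as defined and a = λ_r/λ_PF. -/

import Mathlib

open Real Set

noncomputable def lamR (p : ℝ) : ℝ := (1 - p - Real.sqrt ((1 - p) * (3 * p + 1))) / 2
noncomputable def lamPF (p : ℝ) : ℝ := (1 - p + Real.sqrt ((1 - p) * (3 * p + 1))) / 2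
noncomputable def evRatio (p : ℝ) : ℝ := lamR p / lamPF p

noncomputable def Qmat (p : ℝ) : Matrix (Fin 2) (Fin 2) ℝ :=
  !![1 - p, Real.sqrt (p * (1 - p)); Real.sqrt (p * (1 - p)), 0]

lemma Qmat_pow_aux (p : ℝ) (hp0 : 0 < p) (hp1 : p < 1) (m : ℕ) :
    Qmat p ^ (m + 1) =
      !![(lamPF p ^ (m + 2) - lamR p ^ (m + 2)) / Real.sqrt ((1 - p) * (3 * p + 1)),
         Real.sqrt (p * (1 - p)) *
           ((lamPF p ^ (m + 1) - lamR p ^ (m + 1)) / Real.sqrt ((1 - p) * (3 * p + 1)));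
         Real.sqrt (p * (1 - p)) *
           ((lamPF p ^ (m + 1) - lamR p ^ (m + 1)) / Real.sqrt ((1 - p) * (3 * p + 1))),
         p * (1 - p) * ((lamPF p ^ m - lamR p ^ m) / Real.sqrt ((1 - p) * (3 * p + 1)))] := by
  set s := Real.sqrt ((1 - p) * (3 * p + 1)) with hs_def
  set r := Real.sqrt (p * (1 - p)) with hr_def
  have hs2 : s ^ 2 = (1 - p) * (3 * p + 1) := Real.sq_sqrt (by nlinarith)
  have hspos : 0 < s := Real.sqrt_pos.mpr (by nlinarith)
  have hsne := hspos.ne'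
  have hr2 : r ^ 2 = p * (1 - p) := Real.sq_sqrt (by nlinarith)
  have hPF2 : lamPF p ^ 2 = (1 - p) * lamPF p + p * (1 - p) := by
    unfold lamPF; rw [← hs_def]; linear_combination hs2 / 4
  have hR2 : lamR p ^ 2 = (1 - p) * lamR p + p * (1 - p) := by
    unfold lamR; rw [← hs_def]; linear_combination hs2 / 4
  induction m with
  | zero =>
    have h0 : lamPF p ^ 0 - lamR p ^ 0 = 0 := by simp
    have h1 : lamPF p ^ 1 - lamR p ^ 1 = s := by unfold lamPF lamR; rw [← hs_def]; ring
    have h2 : lamPF p ^ 2 - lamR p ^ 2 = (1 - p) * s := by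
      unfold lamPF lamR; rw [← hs_def]; ring
    have h1' : lamPF p - lamR p = s := by unfold lamPF lamR; rw [← hs_def]; ring
    norm_num
    unfold Qmat
    rw [← hr_def, h2, h1', mul_div_cancel_right₀ _ hsne, div_self hsne, mul_one]
  | succ n ih =>
    rw [pow_succ, ih]
    unfold Qmat
    rw [← hr_def, Matrix.mul_fin_two]
    have hrr : ∀ x : ℝ, r * x * r = p * (1 - p) * x := fun x => by linear_combination x * hr2
    have key3 : (lamPF p ^ (n + 2) - lamR p ^ (n + 2)) * (1 - p) +
        p * (1 - p) * (lamPF p ^ (n + 1) - lamR p ^ (n + 1)) =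
        lamPF p ^ (n + 1 + 2) - lamR p ^ (n + 1 + 2) := by
      linear_combination (-(lamPF p ^ (n + 1))) * hPF2 + lamR p ^ (n + 1) * hR2
    have key2 : (lamPF p ^ (n + 1) - lamR p ^ (n + 1)) * (1 - p) +
        p * (1 - p) * (lamPF p ^ n - lamR p ^ n) =
        lamPF p ^ (n + 1 + 1) - lamR p ^ (n + 1 + 1) := by
      linear_combination (-(lamPF p ^ n)) * hPF2 + lamR p ^ n * hR2
    have E00 : (lamPF p ^ (n + 2) - lamR p ^ (n + 2)) / s * (1 - p) +
        r * ((lamPF p ^ (n + 1) - lamR p ^ (n + 1)) / s) * r =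
        (lamPF p ^ (n + 1 + 2) - lamR p ^ (n + 1 + 2)) / s := by
      rw [hrr, show (lamPF p ^ (n + 2) - lamR p ^ (n + 2)) / s * (1 - p) +
        p * (1 - p) * ((lamPF p ^ (n + 1) - lamR p ^ (n + 1)) / s) =
        ((lamPF p ^ (n + 2) - lamR p ^ (n + 2)) * (1 - p) +
          p * (1 - p) * (lamPF p ^ (n + 1) - lamR p ^ (n + 1))) / s from by ring, key3]
    have E01 : (lamPF p ^ (n + 2) - lamR p ^ (n + 2)) / s * r +
        r * ((lamPF p ^ (n + 1) - lamR p ^ (n + 1)) / s) * 0 =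
        r * ((lamPF p ^ (n + 1 + 1) - lamR p ^ (n + 1 + 1)) / s) := by
      ring
    have E10 : r * ((lamPF p ^ (n + 1) - lamR p ^ (n + 1)) / s) * (1 - p) +
        p * (1 - p) * ((lamPF p ^ n - lamR p ^ n) / s) * r =
        r * ((lamPF p ^ (n + 1 + 1) - lamR p ^ (n + 1 + 1)) / s) := by
      rw [show r * ((lamPF p ^ (n + 1) - lamR p ^ (n + 1)) / s) * (1 - p) +
        p * (1 - p) * ((lamPF p ^ n - lamR p ^ n) / s) * r =
        r * (((lamPF p ^ (n + 1) - lamR p ^ (n + 1)) * (1 - p) +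
          p * (1 - p) * (lamPF p ^ n - lamR p ^ n)) / s) from by ring, key2]
    have E11 : r * ((lamPF p ^ (n + 1) - lamR p ^ (n + 1)) / s) * r +
        p * (1 - p) * ((lamPF p ^ n - lamR p ^ n) / s) * 0 =
        p * (1 - p) * ((lamPF p ^ (n + 1) - lamR p ^ (n + 1)) / s) := by
      rw [hrr]; ring
    rw [E00, E01, E10, E11]

theorem Qmat_pow (p : ℝ) (hp : p ∈ Ioo (0 : ℝ) 1) (m : ℕ) (hm : 1 ≤ m) :
    Qmat p ^ m = (lamPF p ^ m / Real.sqrt ((1 - p) * (3 * p + 1))) •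
      !![lamPF p - evRatio p ^ m * lamR p, (1 - evRatio p ^ m) * Real.sqrt (p * (1 - p));
         (1 - evRatio p ^ m) * Real.sqrt (p * (1 - p)), -lamR p + evRatio p ^ m * lamPF p] := by
  obtain ⟨hp0, hp1⟩ := hp
  obtain ⟨k, rfl⟩ : ∃ k, m = k + 1 := ⟨m - 1, (Nat.succ_pred_eq_of_pos hm).symm⟩
  rw [Qmat_pow_aux p hp0 hp1 k]
  set s := Real.sqrt ((1 - p) * (3 * p + 1)) with hs_def
  set r := Real.sqrt (p * (1 - p)) with hr_def
  have hs2 : s ^ 2 = (1 - p) * (3 * p + 1) := Real.sq_sqrt (by nlinarith)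
  have hspos : 0 < s := Real.sqrt_pos.mpr (by nlinarith)
  have hsne := hspos.ne'
  have hPFpos : 0 < lamPF p := by unfold lamPF; rw [← hs_def]; linarith
  have hPFne := hPFpos.ne'
  have hev : evRatio p = lamR p / lamPF p := rfl
  have hprod : lamPF p * lamR p = -(p * (1 - p)) := by
    unfold lamPF lamR; rw [← hs_def]; linear_combination -hs2 / 4
  ext i j
  fin_cases i <;> fin_cases j <;>
    simp only [Matrix.smul_apply, Matrix.cons_val', Matrix.cons_val_zero, Matrix.cons_val_one,
      Matrix.head_cons, Matrix.head_fin_const, Matrix.empty_val', Matrix.cons_val_fin_one,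
      smul_eq_mul, hev, div_pow, Matrix.of_apply, Fin.zero_eta, Fin.mk_one]
  · field_simp; ring
  · field_simp
  · field_simp
  · field_simp
    linear_combination (lamPF p ^ k - lamR p ^ k) * hprod
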